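/- Lindenbaum lemma for H_DPL: every consistent set of DPL formulas extends to a saturated (equivalently, maximally consistent) set. -/

import Mathlib

open MeasureTheory
open scoped ENNReal

/-- Formulas of dynamic probability logic. -/
inductive DPLF : Type
  | var : ℕ → DPLF
  | neg : DPLF → DPLF
  | conj : DPLF → DPLF → DPLF
  | prob : ℚ → DPLF → DPLF
  | next : DPLF → DPLF
deriving DecidableEq

namespace DPLF

def falsum : DPLF := (var 0).conj (var 0).neg
def impl (φ ψ : DPLF) : DPLF := (φ.conj ψ.neg).neg
def disj (φ ψ : DPLF) : DPLF := (φ.neg.conj ψ.neg).neg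
def iffF (φ ψ : DPLF) : DPLF := (φ.impl ψ).conj (ψ.impl φ)

/-- n-fold application of the next operator. -/
def nextn : ℕ → DPLF → DPLF
  | 0, φ => φ
  | n+1, φ => (nextn n φ).next

/-- Iterated probability operators `L_{r₁ … r_k}`. -/
def probs : List ℚ → DPLF → DPLF
  | [], φ => φ
  | r :: rs, φ => prob r (probs rs φ)

/-- Propositional tautology: true under every Boolean valuation respecting ¬ and ∧. -/
def IsTautology (φ : DPLF) : Prop :=
  ∀ v : DPLF → Bool, (∀ ψ, v ψ.neg = !v ψ) →
    (∀ ψ χ, v (ψ.conj χ) = (v ψ && v χ)) → v φ = true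

/-- Theoremhood in the Hilbert system `H⁻_DPL`. -/
inductive Hm : DPLF → Prop
  | taut {φ : DPLF} : IsTautology φ → Hm φ
  | fa1 : Hm (prob 0 falsum)
  | fa2 {φ : DPLF} {r s : ℚ} : 0 ≤ r → r ≤ 1 → 0 ≤ s → s ≤ 1 → 1 < r + s →
      Hm (impl (prob r φ.neg) (prob s φ).neg)
  | fa3 {φ ψ : DPLF} {r s : ℚ} : 0 ≤ r → 0 ≤ s → r + s ≤ 1 →
      Hm (impl ((prob r (φ.conj ψ)).conj (prob s (φ.conj ψ.neg))) (prob (r+s) φ))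
  | fa4 {φ ψ : DPLF} {r s : ℚ} : 0 ≤ r → 0 ≤ s → r + s ≤ 1 →
      Hm (impl ((prob r (φ.conj ψ)).neg.conj (prob s (φ.conj ψ.neg)).neg) (prob (r+s) φ).neg)
  | mono {φ ψ : DPLF} {r : ℚ} : 0 ≤ r → r ≤ 1 →
      Hm (impl (prob 1 (impl φ ψ)) (impl (prob r φ) (prob r ψ)))
  | func {φ : DPLF} : Hm (iffF φ.neg.next φ.next.neg)
  | conjNext {φ ψ : DPLF} : Hm (iffF (φ.conj ψ).next (φ.next.conj ψ.next))
  | mp {φ ψ : DPLF} : Hm (impl φ ψ) → Hm φ → Hm ψ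
  | arch {φ ψ : DPLF} {n : ℕ} {r : ℚ} : 0 ≤ r → r ≤ 1 →
      (∀ s : ℚ, 0 ≤ s → s < r → Hm (impl ψ (nextn n (prob s φ)))) →
      Hm (impl ψ (nextn n (prob r φ)))
  | necL {φ : DPLF} : Hm φ → Hm (prob 1 φ)
  | necNext {φ : DPLF} : Hm φ → Hm φ.next

/-- Theoremhood in the Hilbert system `H_DPL` (with the generalized Archimedean rule). -/
inductive Hg : DPLF → Prop
  | taut {φ : DPLF} : IsTautology φ → Hg φ
  | fa1 : Hg (prob 0 falsum)
  | fa2 {φ : DPLF} {r s : ℚ} : 0 ≤ r → r ≤ 1 → 0 ≤ s → s ≤ 1 → 1 < r + s →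
      Hg (impl (prob r φ.neg) (prob s φ).neg)
  | fa3 {φ ψ : DPLF} {r s : ℚ} : 0 ≤ r → 0 ≤ s → r + s ≤ 1 →
      Hg (impl ((prob r (φ.conj ψ)).conj (prob s (φ.conj ψ.neg))) (prob (r+s) φ))
  | fa4 {φ ψ : DPLF} {r s : ℚ} : 0 ≤ r → 0 ≤ s → r + s ≤ 1 →
      Hg (impl ((prob r (φ.conj ψ)).neg.conj (prob s (φ.conj ψ.neg)).neg) (prob (r+s) φ).neg)
  | mono {φ ψ : DPLF} {r : ℚ} : 0 ≤ r → r ≤ 1 →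
      Hg (impl (prob 1 (impl φ ψ)) (impl (prob r φ) (prob r ψ)))
  | func {φ : DPLF} : Hg (iffF φ.neg.next φ.next.neg)
  | conjNext {φ ψ : DPLF} : Hg (iffF (φ.conj ψ).next (φ.next.conj ψ.next))
  | mp {φ ψ : DPLF} : Hg (impl φ ψ) → Hg φ → Hg ψ
  | garch {φ ψ : DPLF} {n : ℕ} {rs : List ℚ} {r : ℚ} : 0 ≤ r → r ≤ 1 →
      (∀ q ∈ rs, 0 ≤ q ∧ q ≤ 1) →
      (∀ s : ℚ, 0 ≤ s → s < r → Hg (impl ψ (nextn n (probs rs (prob s φ))))) →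
      Hg (impl ψ (nextn n (probs rs (prob r φ))))
  | necL {φ : DPLF} : Hg φ → Hg (prob 1 φ)
  | necNext {φ : DPLF} : Hg φ → Hg φ.next

/-- Derivability from assumptions in `H⁻_DPL` (no necessitation on assumptions). -/
inductive HmFrom (Γ : Set DPLF) : DPLF → Prop
  | assum {φ : DPLF} : φ ∈ Γ → HmFrom Γ φ
  | thm {φ : DPLF} : Hm φ → HmFrom Γ φ
  | mp {φ ψ : DPLF} : HmFrom Γ (impl φ ψ) → HmFrom Γ φ → HmFrom Γ ψ
  | arch {φ ψ : DPLF} {n : ℕ} {r : ℚ} : 0 ≤ r → r ≤ 1 →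
      (∀ s : ℚ, 0 ≤ s → s < r → HmFrom Γ (impl ψ (nextn n (prob s φ)))) →
      HmFrom Γ (impl ψ (nextn n (prob r φ)))

/-- Derivability from assumptions in `H_DPL` (no necessitation on assumptions). -/
inductive HgFrom (Γ : Set DPLF) : DPLF → Prop
  | assum {φ : DPLF} : φ ∈ Γ → HgFrom Γ φ
  | thm {φ : DPLF} : Hg φ → HgFrom Γ φ
  | mp {φ ψ : DPLF} : HgFrom Γ (impl φ ψ) → HgFrom Γ φ → HgFrom Γ ψ
  | garch {φ ψ : DPLF} {n : ℕ} {rs : List ℚ} {r : ℚ} : 0 ≤ r → r ≤ 1 →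
      (∀ q ∈ rs, 0 ≤ q ∧ q ≤ 1) →
      (∀ s : ℚ, 0 ≤ s → s < r → HgFrom Γ (impl ψ (nextn n (probs rs (prob s φ))))) →
      HgFrom Γ (impl ψ (nextn n (probs rs (prob r φ))))

/-- Consistency of a set of formulas in `H_DPL`. -/
def GConsistent (Γ : Set DPLF) : Prop := ¬ HgFrom Γ falsum

/-- Consistency of a set of formulas in `H⁻_DPL`. -/
def MConsistent (Γ : Set DPLF) : Prop := ¬ HmFrom Γ falsum

/-- Saturated sets of formulas. -/
structure Saturated (w : Set DPLF) : Prop where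
  fincon : ∀ Γ : Set DPLF, Γ ⊆ w → Γ.Finite → GConsistent Γ
  negcomplete : ∀ φ : DPLF, φ ∈ w ∨ φ.neg ∈ w
  archProp : ∀ (φ : DPLF) (n : ℕ) (rs : List ℚ) (r : ℚ), 0 ≤ r → r ≤ 1 →
    (∀ q ∈ rs, 0 ≤ q ∧ q ≤ 1) →
    (∀ s : ℚ, 0 ≤ s → s < r → nextn n (probs rs (prob s φ)) ∈ w) →
    nextn n (probs rs (prob r φ)) ∈ w

/-- The canonical space: all saturated sets. -/
def Omegac : Type := {w : Set DPLF // Saturated w}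

/-- The basic set `[φ]` of saturated sets containing `φ`. -/
def box (φ : DPLF) : Set Omegac := {w | φ ∈ w.1}

/-- The canonical base `B_c`. -/
def Bc : Set (Set Omegac) := {A | ∃ φ : DPLF, A = box φ}

/-- Dynamic Markov model. -/
structure DMM where
  World : Type
  σ : MeasurableSpace World
  T : World → @Measure World σ
  T_prob : ∀ w, IsProbabilityMeasure (T w)
  T_meas : ∀ A : Set World, MeasurableSet[σ] A →
    @Measurable World ℝ≥0∞ σ _ (fun w => T w A)
  f : World → World
  f_meas : @Measurable World World σ σ f
  v : ℕ → Set World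
  v_meas : ∀ p : ℕ, MeasurableSet[σ] (v p)

/-- Satisfaction in a dynamic Markov model. -/
def Sat (M : DMM) : DPLF → M.World → Prop
  | var p, w => w ∈ M.v p
  | neg φ, w => ¬ Sat M φ w
  | conj φ ψ, w => Sat M φ w ∧ Sat M ψ w
  | prob r φ, w => ENNReal.ofReal (r : ℝ) ≤ M.T w {u | Sat M φ u}
  | next φ, w => Sat M φ (M.f w)

end DPLF

/-!
Enumerate all formulas `φ` and all instances `ξ_q = ◯ⁿ L_{r₁…r_k} L_q θ` of the rule `GArch`, and
extend `Γ` along a chain of consistent sets, adding at each stage one formula from a candidate set: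
`{φ, ¬φ}` for a formula, `{ξ_r} ∪ {¬ξ_s | 0 ≤ s < r}` for an instance of `GArch`. Some candidate
always keeps the current set `Δ` consistent: for `{φ, ¬φ}` by the deduction theorem, and for the
second family because otherwise `Δ` would prove every `ξ_s` with `s < r`, hence `ξ_r` by `GArch`,
while `Δ, ξ_r` is inconsistent. The union of the chain is finitely consistent and meets every
candidate set, which gives negation completeness and, since it cannot contain both `ξ_s` and
`¬ξ_s`, the Archimedean property.
-/

section Lindenbaum

variable {α ι : Type*} (Con : Set α → Prop)

open Classical in
noncomputable def extendWithin (S Δ : Set α) : Set α :=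
  if h : ∃ ψ ∈ S, Con (insert ψ Δ) then insert h.choose Δ else Δ

variable {Con}

theorem subset_extendWithin (S Δ : Set α) : Δ ⊆ extendWithin Con S Δ := by
  unfold extendWithin
  split_ifs
  exacts [Set.subset_insert _ _, subset_rfl]

theorem extendWithin_con {S Δ : Set α} (hΔ : Con Δ) : Con (extendWithin Con S Δ) := by
  unfold extendWithin
  split_ifs with h
  exacts [h.choose_spec.2, hΔ]

theorem exists_mem_extendWithin {S Δ : Set α} (h : ∃ ψ ∈ S, Con (insert ψ Δ)) :
    ∃ ψ ∈ S, ψ ∈ extendWithin Con S Δ := by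
  rw [extendWithin, dif_pos h]
  exact ⟨h.choose, h.choose_spec.1, Set.mem_insert _ _⟩

variable (Con)

noncomputable def lindenbaumChain (C : ι → Set α) (e : ℕ → ι) (Γ : Set α) : ℕ → Set α
  | 0 => Γ
  | k + 1 => extendWithin Con (C (e k)) (lindenbaumChain C e Γ k)

variable {Con}

theorem lindenbaumChain_monotone (C : ι → Set α) (e : ℕ → ι) (Γ : Set α) :
    Monotone (lindenbaumChain Con C e Γ) :=
  monotone_nat_of_le_succ fun _ => subset_extendWithin _ _

theorem lindenbaumChain_con {C : ι → Set α} (e : ℕ → ι) {Γ : Set α} (hΓ : Con Γ) :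
    ∀ k, Con (lindenbaumChain Con C e Γ k)
  | 0 => hΓ
  | k + 1 => extendWithin_con (lindenbaumChain_con e hΓ k)

theorem exists_superset_finitelyConsistent_meeting [Nonempty ι] [Countable ι]
    (hCon : ∀ ⦃Δ Δ' : Set α⦄, Δ ⊆ Δ' → Con Δ' → Con Δ) (C : ι → Set α)
    {Γ : Set α} (hΓ : Con Γ) :
    ∃ w, Γ ⊆ w ∧ (∀ Δ ⊆ w, Δ.Finite → Con Δ) ∧
      ∀ i, (∀ Δ, Con Δ → ∃ ψ ∈ C i, Con (insert ψ Δ)) → ∃ ψ ∈ C i, ψ ∈ w := by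
  obtain ⟨e, he⟩ := exists_surjective_nat ι
  set chain := lindenbaumChain Con C e Γ
  refine ⟨⋃ k, chain k, Set.subset_iUnion chain 0, fun Δ hΔw hΔ => ?_, fun i hi => ?_⟩
  · obtain ⟨k, hk⟩ := (lindenbaumChain_monotone C e Γ).directed_le
      |>.exists_mem_subset_of_finset_subset_biUnion (s := hΔ.toFinset) (by simpa using hΔw)
    exact hCon (by simpa using hk) (lindenbaumChain_con e hΓ k)
  · obtain ⟨k, rfl⟩ := he i
    obtain ⟨ψ, hψC, hψ⟩ := exists_mem_extendWithin (hi _ (lindenbaumChain_con e hΓ k))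
    exact ⟨ψ, hψC, Set.mem_iUnion.mpr ⟨k + 1, hψ⟩⟩

end Lindenbaum

namespace DPLF

theorem HgFrom.mono {Γ Δ : Set DPLF} (h : Γ ⊆ Δ) {φ : DPLF} (hφ : HgFrom Γ φ) :
    HgFrom Δ φ := by
  induction hφ with
  | assum hm => exact .assum (h hm)
  | thm ht => exact .thm ht
  | mp _ _ ih₁ ih₂ => exact .mp ih₁ ih₂
  | garch hr0 hr1 hrs _ ih => exact .garch hr0 hr1 hrs ih

theorem Hg.impl_self (φ : DPLF) : Hg (impl φ φ) :=
  .taut fun v hn hc => by simp only [impl, hn, hc]; cases v φ <;> rfl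

theorem Hg.impl_intro (φ ψ : DPLF) : Hg (impl φ (impl ψ φ)) :=
  .taut fun v hn hc => by simp only [impl, hn, hc]; cases v φ <;> cases v ψ <;> rfl

theorem Hg.impl_distrib (φ ψ χ : DPLF) :
    Hg (impl (impl φ (impl ψ χ)) (impl (impl φ ψ) (impl φ χ))) :=
  .taut fun v hn hc => by
    simp only [impl, hn, hc]; cases v φ <;> cases v ψ <;> cases v χ <;> rfl

theorem Hg.curry (φ ψ χ : DPLF) : Hg (impl (impl φ (impl ψ χ)) (impl (φ.conj ψ) χ)) :=
  .taut fun v hn hc => by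
    simp only [impl, hn, hc]; cases v φ <;> cases v ψ <;> cases v χ <;> rfl

theorem Hg.uncurry (φ ψ χ : DPLF) : Hg (impl (impl (φ.conj ψ) χ) (impl φ (impl ψ χ))) :=
  .taut fun v hn hc => by
    simp only [impl, hn, hc]; cases v φ <;> cases v ψ <;> cases v χ <;> rfl

theorem Hg.by_contra (φ : DPLF) : Hg (impl (impl φ.neg falsum) φ) :=
  .taut fun v hn hc => by
    simp only [impl, falsum, hn, hc]; cases v φ <;> cases v (var 0) <;> rfl

theorem Hg.absurd (φ : DPLF) : Hg (impl φ (impl φ.neg falsum)) :=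
  .taut fun v hn hc => by
    simp only [impl, falsum, hn, hc]; cases v φ <;> cases v (var 0) <;> rfl

theorem Hg.neg_falsum : Hg falsum.neg :=
  .taut fun v hn hc => by simp only [falsum, hn, hc]; cases v (var 0) <;> rfl

theorem HgFrom.ded {Γ : Set DPLF} {φ ψ : DPLF} (h : HgFrom (insert φ Γ) ψ) :
    HgFrom Γ (impl φ ψ) := by
  induction h with
  | assum hm =>
    rcases Set.mem_insert_iff.mp hm with rfl | hm
    · exact .thm (Hg.impl_self _)
    · exact .mp (.thm (Hg.impl_intro _ _)) (.assum hm)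
  | thm ht => exact .mp (.thm (Hg.impl_intro _ _)) (.thm ht)
  | mp _ _ ih₁ ih₂ => exact .mp (.mp (.thm (Hg.impl_distrib _ _ _)) ih₁) ih₂
  | garch hr0 hr1 hrs _ ih =>
    -- `GArch` is applied with the conjoined context `φ ∧ ψ`, then uncurried.
    exact .mp (.thm (Hg.uncurry _ _ _))
      (.garch hr0 hr1 hrs fun s hs0 hsr => .mp (.thm (Hg.curry _ _ _)) (ih s hs0 hsr))

theorem HgFrom.of_not_gConsistent_insert_neg {Δ : Set DPLF} {φ : DPLF}
    (h : ¬ GConsistent (insert φ.neg Δ)) : HgFrom Δ φ :=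
  .mp (.thm (Hg.by_contra φ)) (not_not.mp h).ded

theorem not_gConsistent_of_not_gConsistent_insert {Δ : Set DPLF} {φ : DPLF}
    (h : ¬ GConsistent (insert φ Δ)) (hφ : HgFrom Δ φ) : ¬ GConsistent Δ :=
  not_not.mpr (.mp (not_not.mp h).ded hφ)

theorem not_gConsistent_pair (φ : DPLF) : ¬ GConsistent {φ, φ.neg} :=
  not_not.mpr (.mp (.mp (.thm (Hg.absurd φ)) (.assum (by simp))) (.assum (by simp)))

theorem HgFrom.garch_of_forall_lt {Δ : Set DPLF} {θ : DPLF} {n : ℕ} {rs : List ℚ} {r : ℚ}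
    (hr0 : 0 ≤ r) (hr1 : r ≤ 1) (hrs : ∀ q ∈ rs, 0 ≤ q ∧ q ≤ 1)
    (h : ∀ s : ℚ, 0 ≤ s → s < r → HgFrom Δ (nextn n (probs rs (prob s θ)))) :
    HgFrom Δ (nextn n (probs rs (prob r θ))) :=
  .mp (.garch hr0 hr1 hrs fun s hs0 hsr => .mp (.thm (Hg.impl_intro _ falsum.neg)) (h s hs0 hsr))
    (.thm Hg.neg_falsum)

theorem exists_gConsistent_insert_or_insert_neg {Δ : Set DPLF} (hΔ : GConsistent Δ)
    (φ : DPLF) : ∃ ψ ∈ ({φ, φ.neg} : Set DPLF), GConsistent (insert ψ Δ) := by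
  by_contra! h
  exact not_gConsistent_of_not_gConsistent_insert (h φ (by simp))
    (.of_not_gConsistent_insert_neg (h φ.neg (by simp))) hΔ

def archCandidates (θ : DPLF) (n : ℕ) (rs : List ℚ) (r : ℚ) : Set DPLF :=
  insert (nextn n (probs rs (prob r θ)))
    ((fun s => (nextn n (probs rs (prob s θ))).neg) '' Set.Ico 0 r)

theorem exists_gConsistent_insert_archCandidates {Δ : Set DPLF} (hΔ : GConsistent Δ)
    {θ : DPLF} {n : ℕ} {rs : List ℚ} {r : ℚ} (hr0 : 0 ≤ r) (hr1 : r ≤ 1)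
    (hrs : ∀ q ∈ rs, 0 ≤ q ∧ q ≤ 1) :
    ∃ ψ ∈ archCandidates θ n rs r, GConsistent (insert ψ Δ) := by
  by_contra! h
  refine not_gConsistent_of_not_gConsistent_insert (h _ (Set.mem_insert _ _))
    (.garch_of_forall_lt hr0 hr1 hrs fun s hs0 hsr => ?_) hΔ
  exact .of_not_gConsistent_insert_neg (h _ (Set.mem_insert_of_mem _ ⟨s, ⟨hs0, hsr⟩, rfl⟩))

private def encodeNat : DPLF → ℕ
  | var n => Nat.pair 0 n
  | neg φ => Nat.pair 1 (encodeNat φ)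
  | conj φ ψ => Nat.pair 2 (Nat.pair (encodeNat φ) (encodeNat ψ))
  | prob r φ => Nat.pair 3 (Nat.pair (Encodable.encode r) (encodeNat φ))
  | next φ => Nat.pair 4 (encodeNat φ)

private theorem encodeNat_injective : Function.Injective encodeNat := by
  intro a
  induction a <;> intro b h <;> cases b <;>
    simp only [encodeNat, Nat.pair_eq_pair, Encodable.encode_inj] at h <;> grind

instance : Countable DPLF := encodeNat_injective.countable

instance : Inhabited DPLF := ⟨var 0⟩

end DPLF

open DPLF in
/-- Lindenbaum lemma for H_DPL. -/
theorem stmt8 (Γ : Set DPLF) (hΓ : GConsistent Γ) :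
    ∃ w : Set DPLF, Γ ⊆ w ∧ Saturated w := by
  obtain ⟨w, hΓw, hfin, hmeet⟩ := exists_superset_finitelyConsistent_meeting
    (fun _ _ hΔ hcon hbot => hcon (hbot.mono hΔ))
    (Sum.elim (fun φ => {φ, φ.neg})
      fun (⟨n, rs, r, θ⟩ : ℕ × List ℚ × ℚ × DPLF) => archCandidates θ n rs r) hΓ
  refine ⟨w, hΓw, ⟨hfin, fun φ => ?_, fun θ n rs r hr0 hr1 hrs hlt => ?_⟩⟩
  · obtain ⟨ψ, rfl | rfl, hψ⟩ := hmeet (.inl φ) fun Δ hΔ =>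
      exists_gConsistent_insert_or_insert_neg hΔ φ
    exacts [.inl hψ, .inr hψ]
  · obtain ⟨ψ, rfl | ⟨s, ⟨hs0, hsr⟩, rfl⟩, hψ⟩ := hmeet (.inr (n, rs, r, θ)) fun Δ hΔ =>
      exists_gConsistent_insert_archCandidates hΔ hr0 hr1 hrs
    · exact hψ
    · exact absurd (hfin _ (Set.insert_subset (hlt s hs0 hsr) (by simpa using hψ))
        (Set.toFinite _)) (not_gConsistent_pair _)
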